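/- arXiv:2102.10018 — 2 statements merged into one kernel-verified Lean document; each statement's English description precedes it below -/
import Mathlib

section
/- For every finite configuration P ⊂ ℝ^d and every R > 0, the extremal densities satisfy m_{Q(0,R)}(P) / (1 + diam(P)/R)^d ≤ m_{ℝ^d}(P) ≤ m_{Q(0,R)}(P), where m_{ℝ^d}(P) is the supremum of upper densities of measurable subsets of ℝ^d containing no congruent copy of P, and m_{Q(0,R)}(P) is the supremum of vol(A)/R^d over measurable A ⊆ Q(0,R) containing no congruent copy of P. -/
open MeasureTheory Filter

noncomputable section

/-- Borel σ-algebra on real matrices. -/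
instance matMeasurableSpace {d : ℕ} : MeasurableSpace (Matrix (Fin d) (Fin d) ℝ) := borel _

/-- The action of an orthogonal matrix on Euclidean space. -/
def act {d : ℕ} (T : Matrix.orthogonalGroup (Fin d) ℝ)
    (v : EuclideanSpace ℝ (Fin d)) : EuclideanSpace ℝ (Fin d) :=
  (EuclideanSpace.equiv (Fin d) ℝ).symm
    ((T : Matrix (Fin d) (Fin d) ℝ).mulVec (EuclideanSpace.equiv (Fin d) ℝ v))

/-- Open axis-parallel cube of side length `R` centered at `x`. -/
def cube {d : ℕ} (x : EuclideanSpace ℝ (Fin d)) (R : ℝ) : Set (EuclideanSpace ℝ (Fin d)) :=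
  {y | ∀ j, |y j - x j| < R / 2}

/-- `A` contains a congruent copy of the configuration `P`. -/
def hasCopy {d : ℕ} (A P : Set (EuclideanSpace ℝ (Fin d))) : Prop :=
  ∃ (x : EuclideanSpace ℝ (Fin d)) (T : Matrix.orthogonalGroup (Fin d) ℝ),
    (fun p => x + act T p) '' P ⊆ A

/-- The upper density of a set `A ⊆ ℝ^d`. -/
def upperDensity {d : ℕ} (A : Set (EuclideanSpace ℝ (Fin d))) : ℝ :=
  limsup (fun T : ℝ =>
    (volume (A ∩ {y : EuclideanSpace ℝ (Fin d) | ∀ j, |y j| ≤ T})).toReal / (2 * T) ^ d) atTop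

/-- Independence density of the configuration `P` in `ℝ^d`. -/
def mRd {d : ℕ} (P : Set (EuclideanSpace ℝ (Fin d))) : ℝ :=
  sSup (upperDensity '' {A | MeasurableSet A ∧ ¬ hasCopy A P})

/-- Independence density of `P` relative to the cube `Q(0,R)`. -/
def mQcube {d : ℕ} (R : ℝ) (P : Set (EuclideanSpace ℝ (Fin d))) : ℝ :=
  sSup ((fun A => (volume A).toReal / R ^ d) ''
    {A | A ⊆ cube 0 R ∧ MeasurableSet A ∧ ¬ hasCopy A P})

/-! Upper bound: cover `[-T, T]^d` by `(2⌈T/R⌉ + 1)^d` closed cubes of side `R`. Up to a null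
boundary, a `P`-free set meets each of them in a translate of a `P`-free subset of `Q(0,R)`, hence
in measure at most `m_Q(P) R^d`; the density is therefore at most `m_Q(P) (1 + O(R/T))^d`.

Lower bound: repeat a `P`-free `A ⊆ Q(0,R)` along the lattice `L ℤ^d`, `L = R + diam P`. Points
of different translates are more than `diam P` apart, so a congruent copy of `P` in the periodic
set lies in a single translate of `A`. The periodic set is thus `P`-free, of density
`vol A / L^d = (vol A / R^d) / (1 + diam P / R)^d`. -/

open Set Metric Topology

variable {d : ℕ}

section Cubes

def closedCube (x : EuclideanSpace ℝ (Fin d)) (R : ℝ) : Set (EuclideanSpace ℝ (Fin d)) :=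
  {y | ∀ j, |y j - x j| ≤ R / 2}

lemma cube_eq_preimage_ofLp (x : EuclideanSpace ℝ (Fin d)) (R : ℝ) :
    cube x R = WithLp.ofLp ⁻¹' univ.pi fun j => Ioo (x j - R / 2) (x j + R / 2) := by
  ext y
  simp only [cube, mem_ofPred_eq, mem_preimage, mem_univ_pi, mem_Ioo, abs_sub_lt_iff]
  exact forall_congr' fun j => by constructor <;> intro h <;> constructor <;> linarith [h.1, h.2]

lemma closedCube_eq_preimage_ofLp (x : EuclideanSpace ℝ (Fin d)) (R : ℝ) :
    closedCube x R = WithLp.ofLp ⁻¹' univ.pi fun j => Icc (x j - R / 2) (x j + R / 2) := by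
  ext y
  simp only [closedCube, mem_ofPred_eq, mem_preimage, mem_univ_pi, mem_Icc, abs_sub_le_iff]
  exact forall_congr' fun j => by constructor <;> intro h <;> constructor <;> linarith [h.1, h.2]

lemma measurableSet_cube (x : EuclideanSpace ℝ (Fin d)) (R : ℝ) : MeasurableSet (cube x R) := by
  rw [cube_eq_preimage_ofLp]
  exact (MeasurableSet.univ_pi fun _ => measurableSet_Ioo).preimage (WithLp.measurable_ofLp 2 _)

lemma cube_ae_eq_closedCube (x : EuclideanSpace ℝ (Fin d)) (R : ℝ) :
    cube x R =ᵐ[volume] closedCube x R := by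
  rw [cube_eq_preimage_ofLp, closedCube_eq_preimage_ofLp, pi_univ_Icc]
  exact (PiLp.volume_preserving_ofLp _).quasiMeasurePreserving.preimage_ae_eq
    Measure.univ_pi_Ioo_ae_eq_Icc

lemma volume_cube (x : EuclideanSpace ℝ (Fin d)) (R : ℝ) :
    volume (cube x R) = ENNReal.ofReal R ^ d := by
  rw [cube_eq_preimage_ofLp, (PiLp.volume_preserving_ofLp _).measure_preimage
    (MeasurableSet.univ_pi fun _ => measurableSet_Ioo).nullMeasurableSet, Real.volume_pi_Ioo]
  simp

lemma volume_real_cube (x : EuclideanSpace ℝ (Fin d)) {R : ℝ} (hR : 0 ≤ R) :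
    volume.real (cube x R) = R ^ d := by
  simp [measureReal_def, volume_cube, hR]

lemma volume_closedCube (x : EuclideanSpace ℝ (Fin d)) (R : ℝ) :
    volume (closedCube x R) = ENNReal.ofReal R ^ d := by
  rw [← measure_congr (cube_ae_eq_closedCube x R), volume_cube]

lemma volume_real_closedCube (x : EuclideanSpace ℝ (Fin d)) {R : ℝ} (hR : 0 ≤ R) :
    volume.real (closedCube x R) = R ^ d := by
  simp [measureReal_def, volume_closedCube, hR]

lemma volume_real_inter_closedCube (A : Set (EuclideanSpace ℝ (Fin d)))
    (x : EuclideanSpace ℝ (Fin d)) (R : ℝ) :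
    volume.real (A ∩ closedCube x R) = volume.real (A ∩ cube x R) := by
  simp only [measureReal_def,
    measure_congr (ae_eq_set_inter (EventuallyEq.refl _ A) (cube_ae_eq_closedCube x R))]

lemma add_preimage_cube (x : EuclideanSpace ℝ (Fin d)) (R : ℝ) :
    (x + ·) ⁻¹' cube x R = cube 0 R := by
  ext y
  simp [cube]

end Cubes

section Density

def boxDensity (A : Set (EuclideanSpace ℝ (Fin d))) (T : ℝ) : ℝ :=
  volume.real (A ∩ closedCube 0 (2 * T)) / (2 * T) ^ d

lemma upperDensity_eq_limsup_boxDensity (A : Set (EuclideanSpace ℝ (Fin d))) :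
    upperDensity A = limsup (boxDensity A) atTop := by
  have hbox : ∀ T : ℝ,
      {y : EuclideanSpace ℝ (Fin d) | ∀ j, |y j| ≤ T} = closedCube 0 (2 * T) := by
    intro T; ext y; simp [closedCube]
  simp only [upperDensity, hbox]
  rfl

lemma boxDensity_nonneg (A : Set (EuclideanSpace ℝ (Fin d))) {T : ℝ} (hT : 0 ≤ T) :
    0 ≤ boxDensity A T := by
  unfold boxDensity; positivity

lemma boxDensity_le_one (A : Set (EuclideanSpace ℝ (Fin d))) {T : ℝ} (hT : 0 < T) :
    boxDensity A T ≤ 1 := by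
  rw [boxDensity, div_le_one (by positivity),
    ← volume_real_closedCube 0 (by positivity : 0 ≤ 2 * T)]
  exact measureReal_mono inter_subset_right (by rw [volume_closedCube]; finiteness)

lemma upperDensity_le_of_tendsto {A : Set (EuclideanSpace ℝ (Fin d))} {g : ℝ → ℝ} {c : ℝ}
    (hg : Tendsto g atTop (𝓝 c)) (h : ∀ᶠ T in atTop, boxDensity A T ≤ g T) :
    upperDensity A ≤ c := by
  rw [upperDensity_eq_limsup_boxDensity, ← hg.limsup_eq]
  exact limsup_le_limsup h (isCoboundedUnder_le_of_eventually_le _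
    ((eventually_ge_atTop 0).mono fun _ hT => boxDensity_nonneg A hT)) hg.isBoundedUnder_le

lemma le_upperDensity_of_tendsto {A : Set (EuclideanSpace ℝ (Fin d))} {g : ℝ → ℝ} {c : ℝ}
    (hg : Tendsto g atTop (𝓝 c)) (h : ∀ᶠ T in atTop, g T ≤ boxDensity A T) :
    c ≤ upperDensity A := by
  rw [upperDensity_eq_limsup_boxDensity, ← hg.limsup_eq]
  exact limsup_le_limsup h hg.isCoboundedUnder_le (isBoundedUnder_of_eventually_le
    ((eventually_gt_atTop 0).mono fun _ hT => boxDensity_le_one A hT))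

lemma upperDensity_nonneg (A : Set (EuclideanSpace ℝ (Fin d))) : 0 ≤ upperDensity A :=
  le_upperDensity_of_tendsto tendsto_const_nhds
    ((eventually_ge_atTop 0).mono fun _ hT => boxDensity_nonneg A hT)

lemma upperDensity_le_one (A : Set (EuclideanSpace ℝ (Fin d))) : upperDensity A ≤ 1 :=
  upperDensity_le_of_tendsto tendsto_const_nhds
    ((eventually_gt_atTop 0).mono fun _ hT => boxDensity_le_one A hT)

lemma tendsto_add_div_self_pow (a : ℝ) (n : ℕ) :
    Tendsto (fun T : ℝ => ((T + a) / T) ^ n) atTop (𝓝 1) := by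
  have h : (fun T : ℝ => 1 + a * T⁻¹) =ᶠ[atTop] fun T => (T + a) / T := by
    filter_upwards [eventually_ne_atTop 0] with T hT
    field_simp
  simpa using ((tendsto_const_nhds.add (tendsto_inv_atTop_zero.const_mul a)).congr' h).pow n

end Density

section Copies

lemma dist_act (T : Matrix.orthogonalGroup (Fin d) ℝ) (v w : EuclideanSpace ℝ (Fin d)) :
    dist (act T v) (act T w) = dist v w := by
  set U := Matrix.toEuclideanCLM (𝕜 := ℝ) (T : Matrix (Fin d) (Fin d) ℝ)
  have hU : U ∈ unitary _ := Unitary.map_mem _ T.2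
  change dist (U v) (U w) = dist v w
  rw [dist_eq_norm, dist_eq_norm, ← map_sub, ContinuousLinearMap.norm_map_of_mem_unitary hU]

variable {A B P : Set (EuclideanSpace ℝ (Fin d))}

lemma hasCopy.mono (h : hasCopy A P) (hAB : A ⊆ B) : hasCopy B P := by
  obtain ⟨x, T, hx⟩ := h
  exact ⟨x, T, hx.trans hAB⟩

lemma hasCopy.of_add_preimage {x : EuclideanSpace ℝ (Fin d)} (h : hasCopy ((x + ·) ⁻¹' A) P) :
    hasCopy A P := by
  obtain ⟨y, T, hy⟩ := h
  refine ⟨x + y, T, ?_⟩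
  rintro _ ⟨p, hp, rfl⟩
  simpa [add_assoc] using hy ⟨p, hp, rfl⟩

end Copies

section Lattice

def latticePoint (L : ℝ) (k : Fin d → ℤ) : EuclideanSpace ℝ (Fin d) :=
  WithLp.toLp 2 fun j => L * k j

@[simp]
lemma latticePoint_apply (L : ℝ) (k : Fin d → ℤ) (j : Fin d) : latticePoint L k j = L * k j :=
  rfl

lemma card_piFinset_Icc_neg_self (M : ℕ) :
    (Fintype.piFinset fun _ : Fin d => Finset.Icc (-(M : ℤ)) M).card = (2 * M + 1) ^ d := by
  simp only [Fintype.card_piFinset, Int.card_Icc, Finset.prod_const, Finset.card_univ,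
    Fintype.card_fin]
  congr 1
  omega

lemma sub_lt_dist_of_sub_latticePoint_mem_cube {L R : ℝ} {y z : EuclideanSpace ℝ (Fin d)}
    {k k' : Fin d → ℤ} (hy : y - latticePoint L k ∈ cube 0 R)
    (hz : z - latticePoint L k' ∈ cube 0 R) (hkk' : k ≠ k') : L - R < dist y z := by
  obtain ⟨j, hj⟩ := Function.ne_iff.1 hkk'
  have hyj : |y j - L * k j| < R / 2 := by simpa using hy j
  have hzj : |z j - L * k' j| < R / 2 := by simpa using hz j
  have hk : (1 : ℝ) ≤ |(k j : ℝ) - k' j| := by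
    exact_mod_cast Int.one_le_abs (sub_ne_zero.2 hj)
  have hyz : |y j - z j| ≤ dist y z := by
    rw [← Real.dist_eq]
    exact PiLp.dist_apply_le y z j
  calc L - R ≤ |L * (k j - k' j)| - R := by
        rw [abs_mul]
        nlinarith [le_abs_self L, abs_nonneg L]
    _ = |(y j - z j) + -(y j - L * k j) + (z j - L * k' j)| - R := by ring_nf
    _ ≤ |y j - z j| + |y j - L * k j| + |z j - L * k' j| - R := by
        gcongr
        simpa only [abs_neg] using abs_add_three (y j - z j) (-(y j - L * k j)) (z j - L * k' j)
    _ < dist y z := by linarith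

end Lattice

section Periodization

variable {L R : ℝ} {A P : Set (EuclideanSpace ℝ (Fin d))}

def periodization (L : ℝ) (A : Set (EuclideanSpace ℝ (Fin d))) :
    Set (EuclideanSpace ℝ (Fin d)) :=
  ⋃ k : Fin d → ℤ, (· - latticePoint L k) ⁻¹' A

lemma measurableSet_periodization (L : ℝ) (hA : MeasurableSet A) :
    MeasurableSet (periodization L A) :=
  .iUnion fun _ => (measurable_id.sub_const _) hA

lemma volume_preimage_sub_const (c : EuclideanSpace ℝ (Fin d))
    (A : Set (EuclideanSpace ℝ (Fin d))) :
    volume ((· - c) ⁻¹' A) = volume A := by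
  simp only [sub_eq_add_neg, measure_preimage_add_right]

lemma pairwiseDisjoint_sub_latticePoint_preimage (hRL : R ≤ L) (hAR : A ⊆ cube 0 R)
    (s : Set (Fin d → ℤ)) : s.PairwiseDisjoint fun k => (· - latticePoint L k) ⁻¹' A :=
  fun _ _ _ _ hkk' => disjoint_left.2 fun y hy hy' =>
    (sub_lt_dist_of_sub_latticePoint_mem_cube (hAR hy) (hAR hy') hkk').not_ge
      (by simpa using hRL)

lemma hasCopy_of_hasCopy_periodization (hP : Bornology.IsBounded P) (hAR : A ⊆ cube 0 R)
    (hL : R + diam P ≤ L) (h : hasCopy (periodization L A) P) : hasCopy A P := by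
  obtain ⟨x, T, hxT⟩ := h
  rcases P.eq_empty_or_nonempty with rfl | ⟨p₀, hp₀⟩
  · exact ⟨x, T, by simp⟩
  have hcell : ∀ p ∈ P, ∃ k, x + act T p - latticePoint L k ∈ A :=
    fun p hp => mem_iUnion.1 (hxT ⟨p, hp, rfl⟩)
  obtain ⟨k₀, hk₀⟩ := hcell p₀ hp₀
  refine ⟨x - latticePoint L k₀, T, ?_⟩
  rintro _ ⟨p, hp, rfl⟩
  obtain ⟨k, hk⟩ := hcell p hp
  obtain rfl : k = k₀ := by
    by_contra hne
    have hfar := sub_lt_dist_of_sub_latticePoint_mem_cube (hAR hk) (hAR hk₀) hne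
    rw [dist_add_left, dist_act] at hfar
    linarith [dist_le_diam_of_mem hP hp hp₀]
  simpa only [sub_add_eq_add_sub] using hk

end Periodization

section IndependenceDensity

variable {R : ℝ} {A P : Set (EuclideanSpace ℝ (Fin d))}

lemma mQcube_nonneg (hR : 0 ≤ R) (P : Set (EuclideanSpace ℝ (Fin d))) : 0 ≤ mQcube R P :=
  Real.sSup_nonneg <| by
    rintro _ ⟨A, -, rfl⟩
    positivity

lemma volume_real_le_mQcube (hR : 0 < R) (hAR : A ⊆ cube 0 R) (hA : MeasurableSet A)
    (hAP : ¬ hasCopy A P) : volume.real A ≤ mQcube R P * R ^ d := by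
  have hbdd : BddAbove ((fun A => (volume A).toReal / R ^ d) ''
      {A | A ⊆ cube 0 R ∧ MeasurableSet A ∧ ¬ hasCopy A P}) := by
    refine ⟨1, ?_⟩
    rintro _ ⟨B, ⟨hBR, -⟩, rfl⟩
    rw [div_le_one (by positivity), ← volume_real_cube 0 hR.le]
    exact measureReal_mono hBR (by rw [volume_cube]; finiteness)
  rw [← div_le_iff₀ (by positivity)]
  exact le_csSup hbdd ⟨A, ⟨hAR, hA, hAP⟩, rfl⟩

lemma mRd_nonneg (P : Set (EuclideanSpace ℝ (Fin d))) : 0 ≤ mRd P :=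
  Real.sSup_nonneg <| by
    rintro _ ⟨A, -, rfl⟩
    exact upperDensity_nonneg A

lemma upperDensity_le_mRd (hA : MeasurableSet A) (hAP : ¬ hasCopy A P) :
    upperDensity A ≤ mRd P :=
  le_csSup ⟨1, by rintro _ ⟨B, -, rfl⟩; exact upperDensity_le_one B⟩
    ⟨A, ⟨hA, hAP⟩, rfl⟩

end IndependenceDensity

section UpperBound

variable {R T : ℝ} {A P : Set (EuclideanSpace ℝ (Fin d))}

lemma volume_real_inter_closedCube_le_mQcube (hR : 0 < R) (hA : MeasurableSet A)
    (hAP : ¬ hasCopy A P) (x : EuclideanSpace ℝ (Fin d)) :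
    volume.real (A ∩ closedCube x R) ≤ mQcube R P * R ^ d := by
  have htranslate :
      volume.real (A ∩ cube x R) = volume.real ((x + ·) ⁻¹' A ∩ cube 0 R) := by
    rw [← add_preimage_cube x R, ← preimage_inter, measureReal_def, measureReal_def,
      measure_preimage_add]
  rw [volume_real_inter_closedCube, htranslate]
  exact volume_real_le_mQcube hR inter_subset_right
    ((measurable_const_add x hA).inter (measurableSet_cube 0 R))
    fun h => hAP (h.mono inter_subset_left).of_add_preimage

lemma closedCube_subset_biUnion_closedCube_latticePoint (hR : 0 < R) :
    closedCube 0 (2 * T) ⊆ ⋃ k ∈ Fintype.piFinset fun _ : Fin d =>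
      Finset.Icc (-(⌈T / R⌉₊ : ℤ)) ⌈T / R⌉₊, closedCube (latticePoint R k) R := by
  intro y hy
  refine mem_biUnion (x := fun j => round (y j / R)) ?_ fun j => ?_
  · rw [Finset.mem_coe, Fintype.mem_piFinset]
    intro j
    rw [Finset.mem_Icc, ← abs_le]
    have hyj : |y j / R| ≤ T / R := by
      rw [abs_div, abs_of_pos hR]
      gcongr
      simpa [closedCube] using hy j
    have hround : |(round (y j / R) : ℝ)| < ⌈T / R⌉₊ + 1 := by
      have h₁ := abs_sub_round (y j / R)
      have h₂ := abs_sub_abs_le_abs_sub (round (y j / R) : ℝ) (y j / R)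
      rw [abs_sub_comm] at h₂
      linarith [Nat.le_ceil (T / R)]
    exact Int.lt_add_one_iff.1 (by exact_mod_cast hround)
  · have hround := abs_sub_round (y j / R)
    calc |y j - latticePoint R (fun j => round (y j / R)) j|
        = R * |y j / R - round (y j / R)| := by
          rw [latticePoint_apply, ← abs_of_pos hR, ← abs_mul, abs_of_pos hR]
          congr 1
          field_simp
      _ ≤ R / 2 := by nlinarith

lemma boxDensity_le_mQcube (hR : 0 < R) (hA : MeasurableSet A) (hAP : ¬ hasCopy A P)
    (hT : 0 < T) : boxDensity A T ≤ mQcube R P * ((T + 3 * R / 2) / T) ^ d := by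
  set N := ⌈T / R⌉₊
  set F := Fintype.piFinset fun _ : Fin d => Finset.Icc (-(N : ℤ)) N
  have hcover :
      A ∩ closedCube 0 (2 * T) ⊆ ⋃ k ∈ F, A ∩ closedCube (latticePoint R k) R := by
    rw [← inter_iUnion₂]
    exact inter_subset_inter_right _ (closedCube_subset_biUnion_closedCube_latticePoint hR)
  have hvol : volume.real (A ∩ closedCube 0 (2 * T)) ≤ (2 * N + 1) ^ d * (mQcube R P * R ^ d) :=
    calc volume.real (A ∩ closedCube 0 (2 * T))
        ≤ volume.real (⋃ k ∈ F, A ∩ closedCube (latticePoint R k) R) :=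
          measureReal_mono hcover (measure_biUnion_finset_le F _ |>.trans_lt <|
            ENNReal.sum_lt_top.2 fun _ _ => measure_inter_lt_top_of_right_ne_top <| by
              rw [volume_closedCube]; finiteness).ne
      _ ≤ ∑ k ∈ F, volume.real (A ∩ closedCube (latticePoint R k) R) :=
          measureReal_biUnion_finset_le F _
      _ ≤ ∑ _k ∈ F, mQcube R P * R ^ d :=
          Finset.sum_le_sum fun _ _ => volume_real_inter_closedCube_le_mQcube hR hA hAP _
      _ = (2 * N + 1) ^ d * (mQcube R P * R ^ d) := by
          rw [Finset.sum_const, card_piFinset_Icc_neg_self, nsmul_eq_mul]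
          push_cast
          ring
  have hN : (2 * N + 1) * R ≤ 2 * T + 3 * R := by
    have h := mul_lt_mul_of_pos_right (Nat.ceil_lt_add_one (div_pos hT hR).le) hR
    rw [add_mul, div_mul_cancel₀ _ hR.ne'] at h
    linarith
  calc boxDensity A T ≤ (2 * N + 1) ^ d * (mQcube R P * R ^ d) / (2 * T) ^ d := by
        unfold boxDensity
        gcongr
    _ = mQcube R P * ((2 * N + 1) * R / (2 * T)) ^ d := by
        simp only [div_pow, mul_pow]
        ring
    _ ≤ mQcube R P * ((T + 3 * R / 2) / T) ^ d := by
        have hratio : (2 * N + 1) * R / (2 * T) ≤ (T + 3 * R / 2) / T := by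
          rw [div_le_div_iff₀ (by positivity) hT]
          nlinarith
        have := mQcube_nonneg hR.le P
        gcongr

lemma upperDensity_le_mQcube (hR : 0 < R) (hA : MeasurableSet A) (hAP : ¬ hasCopy A P) :
    upperDensity A ≤ mQcube R P :=
  upperDensity_le_of_tendsto
    (by simpa using (tendsto_add_div_self_pow (3 * R / 2) d).const_mul (mQcube R P))
    ((eventually_gt_atTop 0).mono fun _ hT => boxDensity_le_mQcube hR hA hAP hT)

lemma mRd_le_mQcube (hR : 0 < R) (P : Set (EuclideanSpace ℝ (Fin d))) : mRd P ≤ mQcube R P :=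
  Real.sSup_le (by rintro _ ⟨A, ⟨hA, hAP⟩, rfl⟩; exact upperDensity_le_mQcube hR hA hAP)
    (mQcube_nonneg hR.le P)

end UpperBound

section LowerBound

variable {L R T : ℝ} {A P : Set (EuclideanSpace ℝ (Fin d))}

lemma sub_latticePoint_preimage_subset_closedCube (hRL : R ≤ L) (hAR : A ⊆ cube 0 R) {M : ℕ}
    (hMT : (M + 1) * L ≤ T) {k : Fin d → ℤ} (hk : ∀ j, |k j| ≤ M) :
    (· - latticePoint L k) ⁻¹' A ⊆ closedCube 0 (2 * T) := by
  intro y hy j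
  have hyj : |y j - L * k j| < R / 2 := by simpa using hAR hy j
  have hR : 0 < R := by linarith [abs_nonneg (y j - L * k j)]
  have hkj : |L * k j| ≤ L * M := by
    rw [abs_mul, abs_of_pos (hR.trans_le hRL)]
    exact mul_le_mul_of_nonneg_left (by exact_mod_cast hk j) (hR.trans_le hRL).le
  calc |y j - (0 : EuclideanSpace ℝ (Fin d)) j| = |(y j - L * k j) + L * k j| := by simp
    _ ≤ |y j - L * k j| + |L * k j| := abs_add_le _ _
    _ ≤ 2 * T / 2 := by linarith

lemma mul_volume_real_le_volume_real_periodization_inter (hRL : R ≤ L) (hAR : A ⊆ cube 0 R)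
    (hA : MeasurableSet A) {M : ℕ} (hMT : (M + 1) * L ≤ T) :
    (2 * M + 1) ^ d * volume.real A ≤
      volume.real (periodization L A ∩ closedCube 0 (2 * T)) := by
  set F := Fintype.piFinset fun _ : Fin d => Finset.Icc (-(M : ℤ)) M
  have hA_ne_top : volume A ≠ ⊤ :=
    measure_ne_top_of_subset hAR (by rw [volume_cube]; finiteness)
  calc (2 * M + 1) ^ d * volume.real A
      = ∑ k ∈ F, volume.real ((· - latticePoint L k) ⁻¹' A) := by
        simp only [measureReal_def, volume_preimage_sub_const, Finset.sum_const, nsmul_eq_mul]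
        rw [card_piFinset_Icc_neg_self]
        push_cast
        ring
    _ = volume.real (⋃ k ∈ F, (· - latticePoint L k) ⁻¹' A) :=
        (measureReal_biUnion_finset (pairwiseDisjoint_sub_latticePoint_preimage hRL hAR _)
          (fun _ _ => measurable_id.sub_const _ hA)
          (fun _ _ => by rwa [volume_preimage_sub_const])).symm
    _ ≤ volume.real (periodization L A ∩ closedCube 0 (2 * T)) := by
        refine measureReal_mono (iUnion₂_subset fun k hk => subset_inter
          (subset_iUnion (fun k => (· - latticePoint L k) ⁻¹' A) k)
          (sub_latticePoint_preimage_subset_closedCube hRL hAR hMT fun j => ?_))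
          (measure_inter_lt_top_of_right_ne_top (by rw [volume_closedCube]; finiteness)).ne
        exact abs_le.2 <| Finset.mem_Icc.1 (Fintype.mem_piFinset.1 hk j)

lemma le_upperDensity_periodization (hR : 0 < R) (hRL : R ≤ L) (hAR : A ⊆ cube 0 R)
    (hA : MeasurableSet A) : volume.real A / L ^ d ≤ upperDensity (periodization L A) := by
  have hL : 0 < L := hR.trans_le hRL
  refine le_upperDensity_of_tendsto (by
    simpa using (tendsto_add_div_self_pow (-(3 * L / 2)) d).const_mul (volume.real A / L ^ d)) ?_
  filter_upwards [eventually_ge_atTop (2 * L)] with T hT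
  have hT0 : 0 < T := by linarith
  set M := ⌊T / L - 1⌋₊
  have hMT : (M + 1) * L ≤ T := by
    have := Nat.floor_le (a := T / L - 1) (by rw [sub_nonneg, one_le_div hL]; linarith)
    rw [← le_div_iff₀ hL]
    linarith
  have hTM : 2 * T - 3 * L ≤ (2 * M + 1) * L := by
    have := Nat.lt_floor_add_one (T / L - 1)
    rw [sub_lt_iff_lt_add, div_lt_iff₀ hL] at this
    linarith
  calc volume.real A / L ^ d * ((T + -(3 * L / 2)) / T) ^ d
      = volume.real A / L ^ d * ((2 * T - 3 * L) / (2 * T)) ^ d := by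
        congr 2
        field_simp
        ring
    _ ≤ volume.real A / L ^ d * ((2 * M + 1) * L / (2 * T)) ^ d := by
        have : 0 ≤ 2 * T - 3 * L := by linarith
        gcongr
    _ = (2 * M + 1) ^ d * volume.real A / (2 * T) ^ d := by
        rw [div_pow, mul_pow]
        field_simp
    _ ≤ boxDensity (periodization L A) T :=
        div_le_div_of_nonneg_right (mul_volume_real_le_volume_real_periodization_inter hRL hAR hA
          hMT) (by positivity)

lemma volume_real_div_le_mRd (hR : 0 < R) (hP : Bornology.IsBounded P) (hAR : A ⊆ cube 0 R)
    (hA : MeasurableSet A) (hAP : ¬ hasCopy A P) :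
    volume.real A / (R + diam P) ^ d ≤ mRd P :=
  (le_upperDensity_periodization hR (le_add_of_nonneg_right diam_nonneg) hAR hA).trans <|
    upperDensity_le_mRd (measurableSet_periodization _ hA)
      fun h => hAP (hasCopy_of_hasCopy_periodization hP hAR le_rfl h)

end LowerBound

theorem stmt_2_general {d : ℕ} (P : Set (EuclideanSpace ℝ (Fin d)))
    (hPfin : P.Finite) (R : ℝ) (hR : 0 < R) :
    mQcube R P / (1 + Metric.diam P / R) ^ d ≤ mRd P ∧ mRd P ≤ mQcube R P := by
  refine ⟨?_, mRd_le_mQcube hR P⟩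
  have hscale : R + diam P = R * (1 + diam P / R) := by field_simp
  rw [div_le_iff₀ (by positivity)]
  refine Real.sSup_le ?_ (mul_nonneg (mRd_nonneg P) (by positivity))
  rintro _ ⟨A, ⟨hAR, hA, hAP⟩, rfl⟩
  have key := volume_real_div_le_mRd hR hPfin.isBounded hAR hA hAP
  rwa [hscale, mul_pow, ← div_div, div_le_iff₀ (by positivity)] at key

/-- comparison between the whole-space and cube independence densities. -/
theorem stmt_2 {d : ℕ} (hd : 0 < d) (P : Set (EuclideanSpace ℝ (Fin d)))
    (hPfin : P.Finite) (hPne : P.Nonempty) (R : ℝ) (hR : 0 < R) :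
    mQcube R P / (1 + Metric.diam P / R) ^ d ≤ mRd P ∧ mRd P ≤ mQcube R P :=
  stmt_2_general P hPfin R hR
end
end

section
/- Let P = {v₁,…,v_k} ⊂ ℝ^d be a finite configuration and let A ⊂ Q(0,R) be a compact set avoiding P (containing no congruent copy of P). Define g_P : A^k × O(d) → ℝ by g_P(x₁,…,x_k,T) = Σ_{j=2}^k ‖(x_j − x₁) − T(v_j − v₁)‖, and let γ = min over A^k × O(d) of g_P, which is strictly positive. Then for every t > 0 with |t − 1| < γ/(k · diam P), the set A also avoids the dilate tP. -/
open MeasureTheory Filter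

set_option maxHeartbeats 1000000
noncomputable section

variable {d : ℕ}

lemma act_sub (T : Matrix.orthogonalGroup (Fin d) ℝ) (a b : EuclideanSpace ℝ (Fin d)) :
    act T (a - b) = act T a - act T b := by
  simp only [act, map_sub, Matrix.mulVec_sub]

lemma act_smul (T : Matrix.orthogonalGroup (Fin d) ℝ) (c : ℝ) (a : EuclideanSpace ℝ (Fin d)) :
    act T (c • a) = c • act T a := by
  simp only [act, _root_.map_smul, Matrix.mulVec_smul]

open scoped Matrix in
lemma act_norm (T : Matrix.orthogonalGroup (Fin d) ℝ) (w : EuclideanSpace ℝ (Fin d)) :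
    ‖act T w‖ = ‖w‖ := by
  have hT : (T : Matrix (Fin d) (Fin d) ℝ).transpose * (T : Matrix (Fin d) (Fin d) ℝ) = 1 := by
    have := Matrix.UnitaryGroup.star_mul_self T
    rwa [Matrix.star_eq_conjTranspose, Matrix.conjTranspose_eq_transpose_of_trivial] at this
  rw [EuclideanSpace.norm_eq, EuclideanSpace.norm_eq]
  congr 1
  have key : ((T : Matrix (Fin d) (Fin d) ℝ) *ᵥ (EuclideanSpace.equiv (Fin d) ℝ w)) ⬝ᵥ
      ((T : Matrix (Fin d) (Fin d) ℝ) *ᵥ (EuclideanSpace.equiv (Fin d) ℝ w))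
      = (EuclideanSpace.equiv (Fin d) ℝ w) ⬝ᵥ (EuclideanSpace.equiv (Fin d) ℝ w) := by
    rw [Matrix.dotProduct_mulVec, Matrix.vecMul_mulVec, hT, Matrix.vecMul_one]
  have h1 : ∑ i, ‖act T w i‖ ^ 2 = ((T : Matrix (Fin d) (Fin d) ℝ) *ᵥ (EuclideanSpace.equiv (Fin d) ℝ w)) ⬝ᵥ
      ((T : Matrix (Fin d) (Fin d) ℝ) *ᵥ (EuclideanSpace.equiv (Fin d) ℝ w)) := by
    simp [act, dotProduct, Real.norm_eq_abs, sq_abs, sq]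
  have h2 : ∑ i, ‖w i‖ ^ 2 = (EuclideanSpace.equiv (Fin d) ℝ w) ⬝ᵥ (EuclideanSpace.equiv (Fin d) ℝ w) := by
    simp [dotProduct, Real.norm_eq_abs, sq_abs, sq]
  rw [h1, key, ← h2]

lemma continuous_act_w (w : EuclideanSpace ℝ (Fin d)) :
    Continuous fun T : Matrix.orthogonalGroup (Fin d) ℝ => act T w := by
  unfold act
  exact ((EuclideanSpace.equiv (Fin d) ℝ).symm.continuous).comp
    (Continuous.matrix_mulVec continuous_subtype_val continuous_const)

instance orthCompact : CompactSpace (Matrix.orthogonalGroup (Fin d) ℝ) := by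
  have hsub : (Matrix.orthogonalGroup (Fin d) ℝ : Set (Matrix (Fin d) (Fin d) ℝ)) ⊆
      Set.univ.pi fun _ : Fin d => Set.univ.pi fun _ : Fin d => Set.Icc (-1 : ℝ) 1 := by
    intro M hM
    have h1 : star M * M = 1 := (Matrix.mem_orthogonalGroup_iff' (Fin d) ℝ).mp hM
    intro i _ j _
    have hdiag : ∑ l, M l j * M l j = 1 := by
      have := congrArg (fun N => N j j) h1
      simpa [Matrix.mul_apply, Matrix.star_apply] using this
    have hle : M i j * M i j ≤ 1 := by
      rw [← hdiag]
      exact Finset.single_le_sum (fun l _ => mul_self_nonneg (M l j)) (Finset.mem_univ i)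
    have : |M i j| ≤ 1 := by nlinarith [abs_nonneg (M i j), sq_abs (M i j), abs_nonneg (M i j)]
    exact abs_le.mp this
  have hclosed : IsClosed (Matrix.orthogonalGroup (Fin d) ℝ : Set (Matrix (Fin d) (Fin d) ℝ)) := by
    have : (Matrix.orthogonalGroup (Fin d) ℝ : Set (Matrix (Fin d) (Fin d) ℝ)) =
        {M | star M * M = 1} ∩ {M | M * star M = 1} := by
      ext M; exact ⟨fun h => ⟨h.1, h.2⟩, fun h => ⟨h.1, h.2⟩⟩
    rw [this]
    have hstar : Continuous fun M : Matrix (Fin d) (Fin d) ℝ => star M := continuous_star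
    exact ((isClosed_eq (hstar.mul continuous_id) continuous_const)).inter
      (isClosed_eq (continuous_id.mul hstar) continuous_const)
  have hK : IsCompact (Set.univ.pi fun _ : Fin d => Set.univ.pi fun _ : Fin d => Set.Icc (-1 : ℝ) 1) :=
    isCompact_univ_pi fun _ => isCompact_univ_pi fun _ => isCompact_Icc
  have : IsCompact (Matrix.orthogonalGroup (Fin d) ℝ : Set (Matrix (Fin d) (Fin d) ℝ)) :=
    hK.of_isClosed_subset hclosed hsub
  exact isCompact_iff_compactSpace.mp this


/-- a compact `P`-avoiding set also avoids all dilates `tP` with `t` close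
enough to `1`, the gap being measured by the positive minimum `γ` of `g_P`. -/
theorem stmt_14 {d k : ℕ} (hk : 2 ≤ k) (v : Fin k → EuclideanSpace ℝ (Fin d)) (R : ℝ)
    (A : Set (EuclideanSpace ℝ (Fin d))) (hAc : IsCompact A) (hAQ : A ⊆ cube 0 R)
    (hav : ¬ ∃ (x : EuclideanSpace ℝ (Fin d)) (T : Matrix.orthogonalGroup (Fin d) ℝ),
      ∀ i, x + act T (v i) ∈ A)
    (γ : ℝ)
    (hγ : γ = sInf {r : ℝ | ∃ (xs : Fin k → EuclideanSpace ℝ (Fin d))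
        (T : Matrix.orthogonalGroup (Fin d) ℝ), (∀ i, xs i ∈ A) ∧
        r = ∑ j, ‖(xs j - xs ⟨0, by omega⟩) - act T (v j - v ⟨0, by omega⟩)‖}) :
    (A.Nonempty → 0 < γ) ∧
    ∀ t : ℝ, 0 < t → |t - 1| < γ / (k * Metric.diam (Set.range v)) →
      ¬ ∃ (x : EuclideanSpace ℝ (Fin d)) (T : Matrix.orthogonalGroup (Fin d) ℝ),
        ∀ i, x + act T (t • v i) ∈ A := by
  have hk0 : 0 < k := by omega
  set z : Fin k := ⟨0, hk0⟩ with hzdef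
  set g : ((Fin k → EuclideanSpace ℝ (Fin d)) × Matrix.orthogonalGroup (Fin d) ℝ) → ℝ :=
    fun p => ∑ j, ‖(p.1 j - p.1 z) - act p.2 (v j - v z)‖ with hgdef
  set S : Set ℝ := {r : ℝ | ∃ (xs : Fin k → EuclideanSpace ℝ (Fin d))
      (T : Matrix.orthogonalGroup (Fin d) ℝ), (∀ i, xs i ∈ A) ∧
      r = ∑ j, ‖(xs j - xs z) - act T (v j - v z)‖} with hSdef
  have hγ' : γ = sInf S := hγ
  have hbdd : BddBelow S := by
    refine ⟨0, ?_⟩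
    rintro r ⟨xs, T, hxs, rfl⟩
    exact Finset.sum_nonneg fun j _ => norm_nonneg _
  have hgcont : Continuous g := by
    apply continuous_finset_sum
    intro j _
    apply Continuous.norm
    exact (((continuous_apply j).comp continuous_fst).sub
      ((continuous_apply z).comp continuous_fst)).sub
      ((continuous_act_w (v j - v z)).comp continuous_snd)
  set K : Set ((Fin k → EuclideanSpace ℝ (Fin d)) × Matrix.orthogonalGroup (Fin d) ℝ) :=
    (Set.univ.pi fun _ : Fin k => A) ×ˢ Set.univ with hKdef
  have hpos : A.Nonempty → 0 < γ := by
    rintro ⟨a, ha⟩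
    have hKc : IsCompact K := (isCompact_univ_pi fun _ => hAc).prod isCompact_univ
    have hKne : K.Nonempty := by
      refine ⟨(fun _ => a, 1), ?_, Set.mem_univ _⟩
      intro i _; exact ha
    obtain ⟨p0, hp0K, hmin⟩ := hKc.exists_isMinOn hKne hgcont.continuousOn
    have hp0A : ∀ i, p0.1 i ∈ A := fun i => hp0K.1 i (Set.mem_univ i)
    have hmem : g p0 ∈ S := ⟨p0.1, p0.2, hp0A, rfl⟩
    have hγeq : γ = g p0 := by
      rw [hγ']
      refine le_antisymm (csInf_le hbdd hmem) (le_csInf ⟨_, hmem⟩ ?_)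
      rintro r ⟨xs, T, hxs, rfl⟩
      have hKm : (xs, T) ∈ K := Set.mem_prod.mpr ⟨fun i _ => hxs i, Set.mem_univ _⟩
      have h2 : g p0 ≤ g (xs, T) := hmin hKm
      exact h2
    rw [hγeq]
    rcases lt_or_eq_of_le (Finset.sum_nonneg fun j _ => norm_nonneg
      ((p0.1 j - p0.1 z) - act p0.2 (v j - v z))) with h | h
    · exact h
    · exfalso
      apply hav
      have hzero : ∀ j : Fin k, ‖(p0.1 j - p0.1 z) - act p0.2 (v j - v z)‖ = 0 := fun j =>
        (Finset.sum_eq_zero_iff_of_nonneg (fun j _ => norm_nonneg _)).mp h.symm j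
          (Finset.mem_univ j)
      refine ⟨p0.1 z - act p0.2 (v z), p0.2, fun i => ?_⟩
      have hi := hzero i
      rw [norm_eq_zero, sub_eq_zero] at hi
      rw [act_sub] at hi
      have heq : p0.1 z - act p0.2 (v z) + act p0.2 (v i) = p0.1 i := by
        have := hi
        rw [sub_eq_sub_iff_sub_eq_sub] at this
        linear_combination (norm := abel) - this
      rw [heq]
      exact hp0A i
  refine ⟨hpos, ?_⟩
  rintro t ht hlt ⟨x, T, hxT⟩
  set xs : Fin k → EuclideanSpace ℝ (Fin d) := fun i => x + act T (t • v i) with hxsdef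
  have hxsA : ∀ i, xs i ∈ A := fun i => hxT i
  have hne : A.Nonempty := ⟨xs z, hxsA z⟩
  have hγpos := hpos hne
  set D := Metric.diam (Set.range v) with hDdef
  have hkd : 0 < (k : ℝ) * D := by
    by_contra h
    push_neg at h
    have : γ / ((k : ℝ) * D) ≤ 0 := div_nonpos_of_nonneg_of_nonpos hγpos.le h
    have := lt_of_abs_lt hlt
    linarith [abs_nonneg (t - 1), hlt]
  have hbound : |t - 1| * ((k : ℝ) * D) < γ := (lt_div_iff₀ hkd).mp hlt
  have hterm : ∀ j : Fin k, ‖(xs j - xs z) - act T (v j - v z)‖ = |t - 1| * ‖v j - v z‖ := by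
    intro j
    have heq : (xs j - xs z) - act T (v j - v z) = act T ((t - 1) • (v j - v z)) := by
      rw [act_smul, act_sub, hxsdef]
      simp only [act_smul]
      module
    rw [heq, act_norm, norm_smul, Real.norm_eq_abs]
  have hrS : (∑ j, ‖(xs j - xs z) - act T (v j - v z)‖) ∈ S := ⟨xs, T, hxsA, rfl⟩
  have hγle : γ ≤ ∑ j, ‖(xs j - xs z) - act T (v j - v z)‖ := hγ' ▸ csInf_le hbdd hrS
  have hsum : (∑ j, ‖(xs j - xs z) - act T (v j - v z)‖) ≤ |t - 1| * ((k : ℝ) * D) := by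
    have hb : ∀ j : Fin k, ‖v j - v z‖ ≤ D := by
      intro j
      rw [← dist_eq_norm]
      exact Metric.dist_le_diam_of_mem ((Set.finite_range v).isBounded)
        (Set.mem_range_self j) (Set.mem_range_self z)
    calc (∑ j, ‖(xs j - xs z) - act T (v j - v z)‖)
        = ∑ j : Fin k, |t - 1| * ‖v j - v z‖ := Finset.sum_congr rfl fun j _ => hterm j
      _ ≤ ∑ _j : Fin k, |t - 1| * D := Finset.sum_le_sum fun j _ =>
          mul_le_mul_of_nonneg_left (hb j) (abs_nonneg _)
      _ = (k : ℝ) * (|t - 1| * D) := by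
          rw [Finset.sum_const, Finset.card_univ, Fintype.card_fin, nsmul_eq_mul]
      _ = |t - 1| * ((k : ℝ) * D) := by ring
  linarith
end
end
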